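/- arXiv:2208.03071 — 4 statements merged into one kernel-verified Lean document; each statement's English description precedes it below -/
import Mathlib

section
/- Let T : Fin 3 × Fin 3 × Fin 3 → ℂ (written T^j_{ik}, indices 1,2,3) satisfy T^j_{ik} = -T^j_{ki}. Define η_k = Σ_i T^i_{ik}. Suppose η_1 = η_2 = 0, η_3 = λ > 0, suppose Σ_r η_r T^r_{ij} = 0 for all i,j, and suppose T^1_{23} = T^2_{13} = 0. Then T^3_{ij} = 0 for all i,j, and T^1_{12} = T^2_{12} = 0; hence the only possibly nonzero torsion components are a = T^1_{13} and b = T^2_{23}, with a + b = λ. -/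
open Finset

theorem stmt6 (T : Fin 3 → Fin 3 → Fin 3 → ℂ)
    (hT : ∀ j i k, T j i k = - T j k i)
    (η : Fin 3 → ℂ) (hη : ∀ k, η k = ∑ i, T i i k)
    (lam : ℝ) (hlam : 0 < lam)
    (h1 : η 0 = 0) (h2 : η 1 = 0) (h3 : η 2 = lam)
    (hηT : ∀ i j : Fin 3, ∑ r, η r * T r i j = 0)
    (hd1 : T 0 1 2 = 0) (hd2 : T 1 0 2 = 0) :
    (∀ i j : Fin 3, T 2 i j = 0) ∧ T 0 0 1 = 0 ∧ T 1 0 1 = 0 ∧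
      T 0 0 2 + T 1 1 2 = lam := by
  have hlam' : (lam : ℂ) ≠ 0 := by exact_mod_cast (ne_of_gt hlam)
  have hT2 : ∀ i j : Fin 3, T 2 i j = 0 := by
    intro i j
    have h := hηT i j
    rw [Fin.sum_univ_three, h1, h2, h3] at h
    simpa [hlam'] using h
  have hdiag : ∀ j i : Fin 3, T j i i = 0 := fun j i => by
    linear_combination (1/2 : ℂ) * hT j i i
  have e0 := hη 0; rw [Fin.sum_univ_three, h1, hdiag, hT2] at e0
  have e1 := hη 1; rw [Fin.sum_univ_three, h2, hdiag, hT2] at e1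
  have e2 := hη 2; rw [Fin.sum_univ_three, h3, hdiag] at e2
  refine ⟨hT2, by linear_combination -e1, by linear_combination hT 1 0 1 + e0, by linear_combination -e2⟩
end

section
/- For all X, Y ∈ ℂ³, the identity 2 Σ_{i=1}^3 |X_i Y_i|² + |X₂Y₁|² + |X₂Y₃|² + 2 Re(X₁ conj(X₂) conj(Y₁) Y₂) + 2 Re(X₂ conj(X₃) conj(Y₂) Y₃) - 2 Re(X₁ conj(X₃) conj(Y₁) Y₃) = |X₂Y₁|² + |X₂Y₃|² + |X₁ conj(Y₁) + X₂ conj(Y₂)|² + |X₁ conj(Y₁) - X₃ conj(Y₃)|² + |X₂ conj(Y₂) + X₃ conj(Y₃)|² holds; in particular the left-hand side is ≥ 0. -/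
open Finset

/-!
With `uᵢ = Xᵢ · conj Yᵢ` one has `|XᵢYᵢ| = |uᵢ|` and `Xᵢ conj(Xⱼ) conj(Yᵢ) Yⱼ = uᵢ conj(uⱼ)`, whose real
part is the real inner product `⟪uᵢ, uⱼ⟫` on `ℂ ≅ ℝ²`. Cancelling the terms `|X₂Y₁|², |X₂Y₃|²` common to
both sides, the identity becomes
`2 Σ |uᵢ|² + 2⟪u₀, u₁⟫ + 2⟪u₁, u₂⟫ - 2⟪u₀, u₂⟫ = |u₀ + u₁|² + |u₀ - u₂|² + |u₁ + u₂|²`,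
which is `‖a ± b‖² = ‖a‖² ± 2⟪a, b⟫ + ‖b‖²` applied to each square.
-/

open scoped ComplexConjugate RealInnerProductSpace

theorem norm_add_sq_add_norm_sub_sq_add_norm_add_sq {F : Type*} [NormedAddCommGroup F]
    [InnerProductSpace ℝ F] (u v w : F) :
    ‖u + v‖ ^ 2 + ‖u - w‖ ^ 2 + ‖v + w‖ ^ 2 =
      2 * (‖u‖ ^ 2 + ‖v‖ ^ 2 + ‖w‖ ^ 2) + 2 * ⟪u, v⟫ + 2 * ⟪v, w⟫ - 2 * ⟪u, w⟫ := by
  rw [norm_add_sq_real, norm_sub_sq_real, norm_add_sq_real]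
  ring

theorem Complex.re_mul_conj (z w : ℂ) : (z * conj w).re = ⟪z, w⟫ := by
  rw [real_inner_comm, Complex.inner]

theorem mul_star_mul_star_mul_eq {R : Type*} [CommRing R] [StarRing R] (a b c d : R) :
    a * star c * star b * d = a * star b * star (c * star d) := by
  rw [star_mul', star_star]
  ring

theorem stmt12 (X Y : Fin 3 → ℂ) :
    (2 * ∑ i, ‖X i * Y i‖ ^ 2 +
      ‖X 1 * Y 0‖ ^ 2 + ‖X 1 * Y 2‖ ^ 2 +
      2 * (X 0 * (starRingEnd ℂ) (X 1) * (starRingEnd ℂ) (Y 0) * Y 1).re +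
      2 * (X 1 * (starRingEnd ℂ) (X 2) * (starRingEnd ℂ) (Y 1) * Y 2).re -
      2 * (X 0 * (starRingEnd ℂ) (X 2) * (starRingEnd ℂ) (Y 0) * Y 2).re =
      ‖X 1 * Y 0‖ ^ 2 + ‖X 1 * Y 2‖ ^ 2 +
      ‖X 0 * (starRingEnd ℂ) (Y 0) + X 1 * (starRingEnd ℂ) (Y 1)‖ ^ 2 +
      ‖X 0 * (starRingEnd ℂ) (Y 0) - X 2 * (starRingEnd ℂ) (Y 2)‖ ^ 2 +
      ‖X 1 * (starRingEnd ℂ) (Y 1) + X 2 * (starRingEnd ℂ) (Y 2)‖ ^ 2) ∧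
    0 ≤ 2 * ∑ i, ‖X i * Y i‖ ^ 2 +
      ‖X 1 * Y 0‖ ^ 2 + ‖X 1 * Y 2‖ ^ 2 +
      2 * (X 0 * (starRingEnd ℂ) (X 1) * (starRingEnd ℂ) (Y 0) * Y 1).re +
      2 * (X 1 * (starRingEnd ℂ) (X 2) * (starRingEnd ℂ) (Y 1) * Y 2).re -
      2 * (X 0 * (starRingEnd ℂ) (X 2) * (starRingEnd ℂ) (Y 0) * Y 2).re := by
  suffices hsos : _ = _ from ⟨hsos, hsos ▸ by positivity⟩
  have hnorm (i : Fin 3) : ‖X i * Y i‖ = ‖X i * conj (Y i)‖ := by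
    rw [norm_mul, norm_mul, Complex.norm_conj]
  have hcross (i j : Fin 3) :
      X i * conj (X j) * conj (Y i) * Y j = X i * conj (Y i) * conj (X j * conj (Y j)) :=
    mul_star_mul_star_mul_eq _ _ _ _
  simp only [Fin.sum_univ_three, hnorm, hcross, Complex.re_mul_conj]
  linear_combination -norm_add_sq_add_norm_sub_sq_add_norm_add_sq
    (X 0 * conj (Y 0)) (X 1 * conj (Y 1)) (X 2 * conj (Y 2))
end

section
/- For all X, Y ∈ ℂ³, define I_i = Im(X_i conj(Y_i)). Then the expression S(X,Y) = 4(I₁+I₂)² + 4(I₂+I₃)² + 4(I₁-I₃)² + (1/2)|X₁conj(Y₂) - Y₁conj(X₂)|² + (1/2)|X₂conj(Y₃) - Y₂conj(X₃)|² + (1/2)|X₁Y₃ - Y₁X₃|² is nonnegative, and it vanishes for some X, Y with X ∧ Y ≠ 0 (viewing X, Y as vectors in ℂ³): namely, for X₁ = X₂ = X₃ = t with t ∈ ℝ, t ≠ 0, and Y₁ = conj(Y₂) = Y₃ = ρ with ρ ∈ ℂ \ ℝ, one has S(X,Y) = 0 while X and Y are ℂ-linearly independent. -/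
/-- The sectional-curvature expression `S(X,Y)` of the Wallach threefold. -/
noncomputable def Swallach (X Y : Fin 3 → ℂ) : ℝ :=
  4 * ((X 0 * (starRingEnd ℂ) (Y 0)).im + (X 1 * (starRingEnd ℂ) (Y 1)).im) ^ 2 +
  4 * ((X 1 * (starRingEnd ℂ) (Y 1)).im + (X 2 * (starRingEnd ℂ) (Y 2)).im) ^ 2 +
  4 * ((X 0 * (starRingEnd ℂ) (Y 0)).im - (X 2 * (starRingEnd ℂ) (Y 2)).im) ^ 2 +
  (1 / 2) * ‖X 0 * (starRingEnd ℂ) (Y 1) - Y 0 * (starRingEnd ℂ) (X 1)‖ ^ 2 +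
  (1 / 2) * ‖X 1 * (starRingEnd ℂ) (Y 2) - Y 1 * (starRingEnd ℂ) (X 2)‖ ^ 2 +
  (1 / 2) * ‖X 0 * Y 2 - Y 0 * X 2‖ ^ 2

theorem Swallach_nonneg (X Y : Fin 3 → ℂ) : 0 ≤ Swallach X Y := by
  unfold Swallach
  positivity

/- With `X` real and constant, `I₁ = -I₂ = I₃ = -t Im ρ`, and each of the three
two-by-two minors is `t ρ - ρ t` or its conjugate. -/
theorem Swallach_const_ofReal (t : ℝ) (ρ : ℂ) :
    Swallach (fun _ => (t : ℂ)) ![ρ, (starRingEnd ℂ) ρ, ρ] = 0 := by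
  simp [Swallach, Complex.mul_im, mul_comm]

theorem linearIndependent_pair_of_apply_eq_of_apply_ne {K ι : Type*} [Field K]
    {x y : ι → K} {i j : ι} (hxij : x i = x j) (hx : x i ≠ 0) (hy : y i ≠ y j) :
    LinearIndependent K ![x, y] := by
  simp only [linearIndependent_fin2, Matrix.cons_val_one, Matrix.cons_val_zero]
  refine ⟨fun hy0 => hy (by simp [hy0]), fun a hax => ?_⟩
  have hai : a * y i = x i := by rw [← hax, Pi.smul_apply, smul_eq_mul]
  have haj : a * y j = x j := by rw [← hax, Pi.smul_apply, smul_eq_mul]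
  have ha : a ≠ 0 := by rintro rfl; exact hx (by simpa using hai.symm)
  exact hy (mul_left_cancel₀ ha (by rw [hai, haj, hxij]))

theorem stmt14 :
    (∀ X Y : Fin 3 → ℂ, 0 ≤ Swallach X Y) ∧
    (∀ (t : ℝ) (ρ : ℂ), t ≠ 0 → ρ.im ≠ 0 →
      Swallach (fun _ => (t : ℂ)) ![ρ, (starRingEnd ℂ) ρ, ρ] = 0 ∧
      LinearIndependent ℂ ![(fun _ => (t : ℂ) : Fin 3 → ℂ), ![ρ, (starRingEnd ℂ) ρ, ρ]]) := by
  refine ⟨Swallach_nonneg, fun t ρ ht hρ => ⟨Swallach_const_ofReal t ρ, ?_⟩⟩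
  have hρ_ne_conj : ρ ≠ (starRingEnd ℂ) ρ := fun h => hρ (Complex.conj_eq_iff_im.mp h.symm)
  exact linearIndependent_pair_of_apply_eq_of_apply_ne (i := 0) (j := 1) rfl
    (Complex.ofReal_ne_zero.mpr ht) hρ_ne_conj
end

section
/- Let n ≥ 3 and let T : Fin n × Fin n × Fin n → ℂ (written T^j_{ik}) satisfy T^j_{ik} = -T^j_{ki}. Suppose there exists λ > 0 such that, setting u_n = λ and u_i = 0 for i < n, the relation δ_{kn}·T^j_{iℓ} = δ_{jℓ}·T^n_{ik} holds for all i < k and all j ∉ {i,k} and all ℓ. Then T^j_{ik} = 0 whenever i, j, k are pairwise distinct, and T^j_{ij} = T^n_{in} for all i, j < n with i ≠ j. -/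
theorem stmt18 (n : ℕ) (hn : 2 ≤ n) (T : Fin (n + 1) → Fin (n + 1) → Fin (n + 1) → ℂ)
    (hT : ∀ j i k, T j i k = - T j k i)
    (lam : ℝ) (hlam : 0 < lam)
    (hrel : ∀ i k j ℓ : Fin (n + 1), i < k → j ≠ i → j ≠ k →
      (if k = Fin.last n then (1 : ℂ) else 0) * T j i ℓ =
      (if j = ℓ then (1 : ℂ) else 0) * T (Fin.last n) i k) :
    (∀ i j k : Fin (n + 1), i ≠ j → j ≠ k → i ≠ k → T j i k = 0) ∧
    (∀ i j : Fin (n + 1), i ≠ j → i ≠ Fin.last n → j ≠ Fin.last n →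
      T j i j = T (Fin.last n) i (Fin.last n)) := by
  have hlt : ∀ i : Fin (n + 1), i ≠ Fin.last n → i < Fin.last n :=
    fun i h => lt_of_le_of_ne (Fin.le_last i) h
  -- Lemma 1: from k = last case
  have L1 : ∀ i j ℓ : Fin (n + 1), i ≠ Fin.last n → j ≠ i → j ≠ Fin.last n → ℓ ≠ j →
      T j i ℓ = 0 := by
    intro i j ℓ hi hji hjl hlj
    have h := hrel i (Fin.last n) j ℓ (hlt i hi) hji hjl
    rw [if_pos rfl, one_mul, if_neg (Ne.symm hlj), zero_mul] at h
    exact h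
  -- Lemma 2: T^last i k = 0 for i, k ≠ last, i ≠ k
  have L2 : ∀ i k : Fin (n + 1), i ≠ Fin.last n → k ≠ Fin.last n → i ≠ k →
      T (Fin.last n) i k = 0 := by
    have key : ∀ i k : Fin (n + 1), i < k → k ≠ Fin.last n → T (Fin.last n) i k = 0 := by
      intro i k hik hk
      have hli : Fin.last n ≠ i := fun h => hk (le_antisymm (Fin.le_last k)
        (h ▸ le_of_lt hik))
      have hlk : Fin.last n ≠ k := fun h => hk h.symm
      have h := hrel i k (Fin.last n) (Fin.last n) hik hli hlk
      rw [if_neg hk, if_pos rfl, zero_mul, one_mul] at h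
      exact h.symm
    intro i k hi hk hik
    rcases lt_or_gt_of_ne hik with h | h
    · exact key i k h hk
    · rw [hT]
      rw [key k i h hi, neg_zero]
  constructor
  · intro i j k hij hjk hik
    by_cases hjL : j = Fin.last n
    · subst hjL
      exact L2 i k hij (Ne.symm hjk) hik
    · by_cases hiL : i = Fin.last n
      · have hkL : k ≠ Fin.last n := fun h => hik (hiL.trans h.symm)
        rw [hT]
        rw [L1 k j i hkL hjk hjL hij, neg_zero]
      · exact L1 i j k hiL (Ne.symm hij) hjL (Ne.symm hjk)
  · intro i j hij hiL hjL
    have h := hrel i (Fin.last n) j j (hlt i hiL) (Ne.symm hij) hjL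
    simpa using h
end
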